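/- Assume Property 3. Fates are inherited backwards along fast reactions: for every fast reaction ({a}, {b_1, …, b_n}) in R and all finite multisets F_1, …, F_n of resting sets with Fate(b_i, F_i) for each i, Fate(a, F_1 + … + F_n) holds. -/

import Mathlib

/-!
If some product `b` of the fast reaction `({a}, P)` lies in `SCC(a)`, then `b` reaches `a` back
along `Γ`, and this path closed up by the reaction itself is a cyclic sequence of fast reactions;
Property 3 forces `P = {b}`, and `a`, `b` share their SCC and hence their fates. Otherwise the
reaction leaves `SCC(a)`, so `SCC(a)` is not a resting set and the reaction is one of the steps in
the second clause of the definition of `Fate`.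
-/

/-- A reaction: a pair (reactants, products) of finite multisets of complexes. -/
abbrev Rxn (C : Type*) := Multiset C × Multiset C

variable {C : Type*}

/-- Edge of the fast-reaction digraph Γ: a fast (1,1) reaction ({x}, {y}) in R. -/
def FastEdge (R : Set (Rxn C)) (x y : C) : Prop :=
  ((({x} : Multiset C), ({y} : Multiset C)) : Rxn C) ∈ R

/-- Reachability along Γ. -/
def Reach (R : Set (Rxn C)) : C → C → Prop :=
  Relation.ReflTransGen (FastEdge R)

/-- The strongly connected component of Γ containing x. -/
def scc (R : Set (Rxn C)) (x : C) : Set C :=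
  {y | Reach R x y ∧ Reach R y x}

/-- Q is a resting set: an SCC of Γ all of whose outgoing fast reactions stay in Q. -/
def IsRestingSet (R : Set (Rxn C)) (Q : Set C) : Prop :=
  (∃ x, Q = scc R x) ∧
    ∀ r ∈ R, r.1.card = 1 → (∀ a ∈ r.1, a ∈ Q) → ∀ b ∈ r.2, b ∈ Q

/-- x is a resting complex: a member of some resting set. -/
def RestingComplex (R : Set (Rxn C)) (x : C) : Prop :=
  ∃ Q, IsRestingSet R Q ∧ x ∈ Q

/-- One step of a fast transition: replace one occurrence of x by the products of a
fast reaction ({x}, P) ∈ R. -/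
def FastStep (R : Set (Rxn C)) (M N : Multiset C) : Prop :=
  ∃ (x : C) (P M' : Multiset C),
    ((({x} : Multiset C), P) : Rxn C) ∈ R ∧ M = x ::ₘ M' ∧ N = P + M'

/-- A fast transition: finitely many fast steps. -/
def FastTransition (R : Set (Rxn C)) : Multiset C → Multiset C → Prop :=
  Relation.ReflTransGen (FastStep R)

/-- The fate predicate Fate(x, F), for x a complex and F a finite multiset of resting sets. -/
inductive Fate (R : Set (Rxn C)) : C → Multiset (Set C) → Prop
  | resting (x : C) (h : IsRestingSet R (scc R x)) :
      Fate R x {scc R x}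
  | step (x a : C) (l : List (C × Multiset (Set C)))
      (hnr : ¬ IsRestingSet R (scc R x))
      (ha : a ∈ scc R x)
      (hr : ((({a} : Multiset C), (↑(l.map Prod.fst) : Multiset C)) : Rxn C) ∈ R)
      (hout : ∃ b ∈ l.map Prod.fst, b ∉ scc R x)
      (hf : ∀ p ∈ l, Fate R p.1 p.2) :
      Fate R x (l.map Prod.snd).sum

/-- B ~ F : the multiset B of complexes represents the multiset F of resting sets,
i.e. there is a bijective matching pairing each b ∈ B with a Q ∈ F with b ∈ Q. -/
def Represents (B : Multiset C) (F : Multiset (Set C)) : Prop :=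
  Multiset.Rel (fun b Q => b ∈ Q) B F

/-- F is a fate of the multiset P of complexes: F = F_1 + ... + F_n where
P = {b_1, ..., b_n} and Fate(b_i, F_i) for each i. -/
def FateM (R : Set (Rxn C)) (P : Multiset C) (F : Multiset (Set C)) : Prop :=
  ∃ l : List (C × Multiset (Set C)),
    P = (↑(l.map Prod.fst) : Multiset C) ∧
    F = (l.map Prod.snd).sum ∧
    ∀ p ∈ l, Fate R p.1 p.2

/-- The condensed reactions: for each slow reaction ({a₁, a₂}, P) ∈ R and each fate F
of P, the condensed reaction ({SCC(a₁), SCC(a₂)}, F). -/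
def IsCondensed (R : Set (Rxn C)) (Ahat Bhat : Multiset (Set C)) : Prop :=
  ∃ (a1 a2 : C) (P : Multiset C),
    ((({a1, a2} : Multiset C), P) : Rxn C) ∈ R ∧
    Ahat = ({scc R a1, scc R a2} : Multiset (Set C)) ∧
    FateM R P Bhat

/-- Every reaction in R is fast (unimolecular) or slow (bimolecular). -/
def FastOrSlow (R : Set (Rxn C)) : Prop :=
  ∀ r ∈ R, r.1.card = 1 ∨ r.1.card = 2

/-- Reactants and products of every reaction are nonempty. -/
def NonemptyRxns (R : Set (Rxn C)) : Prop :=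
  ∀ r ∈ R, r.1 ≠ 0 ∧ r.2 ≠ 0

/-- Property 3: every finite cyclic sequence of fast reactions, in which each reaction
consumes a product of the previous one (cyclically), consists of (1,1) reactions only. -/
def Prop3 (R : Set (Rxn C)) : Prop :=
  ∀ (n : ℕ) (hn : 0 < n) (r : Fin n → Rxn C),
    (∀ i, r i ∈ R ∧ (r i).1.card = 1) →
    (∀ i : Fin n, ∀ a ∈ (r ⟨(i.1 + 1) % n, Nat.mod_lt _ hn⟩).1, a ∈ (r i).2) →
    ∀ i, (r i).2.card = 1

/-- Property 4: both reactants of every slow reaction are resting complexes. -/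
def Prop4 (R : Set (Rxn C)) : Prop :=
  ∀ r ∈ R, r.1.card = 2 → ∀ a ∈ r.1, RestingComplex R a

/-- A resting-state transition from {a₁, a₂} to B: a slow reaction ({a₁, a₂}, P) ∈ R
followed by a fast transition from P to B. -/
def RestingTransition (R : Set (Rxn C)) (a1 a2 : C) (B : Multiset C) : Prop :=
  ∃ P : Multiset C, ((({a1, a2} : Multiset C), P) : Rxn C) ∈ R ∧ FastTransition R P B

/-- One step of a sequence of detailed reactions: remove the reactants of some
reaction in R from the current multiset and add its products. -/
def DetailedStep (R : Set (Rxn C)) (M N : Multiset C) : Prop :=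
  ∃ r ∈ R, ∃ M' : Multiset C, M = r.1 + M' ∧ N = r.2 + M'

/-- One step of a sequence of condensed reactions: remove the reactant multiset of a
condensed reaction from the current multiset of resting sets and add its products. -/
def CondensedStep (R : Set (Rxn C)) (M N : Multiset (Set C)) : Prop :=
  ∃ Ahat Bhat M' : Multiset (Set C),
    IsCondensed R Ahat Bhat ∧ M = Ahat + M' ∧ N = Bhat + M'

theorem Relation.ReflTransGen.exists_seq {α : Type*} {r : α → α → Prop} {a b : α}
    (h : Relation.ReflTransGen r a b) :
    ∃ (m : ℕ) (c : ℕ → α), c 0 = a ∧ c m = b ∧ ∀ k < m, r (c k) (c (k + 1)) := by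
  induction h using Relation.ReflTransGen.head_induction_on with
  | refl => exact ⟨0, fun _ => b, rfl, rfl, fun k hk => absurd hk k.not_lt_zero⟩
  | head hxy _ ih =>
    obtain ⟨m, c, hc0, hcm, hc⟩ := ih
    refine ⟨m + 1, fun | 0 => _ | k + 1 => c k, rfl, hcm, ?_⟩
    rintro (_ | k) hk
    · simpa [hc0] using hxy
    · exact hc k (by omega)

lemma mem_scc_self (R : Set (Rxn C)) (a : C) : a ∈ scc R a :=
  ⟨.refl, .refl⟩

lemma scc_eq_of_mem {R : Set (Rxn C)} {a b : C} (h : b ∈ scc R a) : scc R a = scc R b := by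
  obtain ⟨hab, hba⟩ := h
  ext y
  exact ⟨fun ⟨h1, h2⟩ => ⟨hba.trans h1, h2.trans hab⟩,
    fun ⟨h1, h2⟩ => ⟨hab.trans h1, h2.trans hba⟩⟩

lemma Fate.of_scc_eq {R : Set (Rxn C)} {a b : C} (hab : scc R a = scc R b)
    {F : Multiset (Set C)} (h : Fate R b F) : Fate R a F := by
  cases h with
  | resting _ hx =>
    rw [← hab] at hx ⊢
    exact .resting a hx
  | step _ x' l hnr hx' hr hout hf =>
    rw [← hab] at hnr hx' hout
    exact .step a x' l hnr hx' hr hout hf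

lemma not_isRestingSet_scc_of_mem_products {R : Set (Rxn C)} {a b : C} {P : Multiset C}
    (hr : ((({a} : Multiset C), P) : Rxn C) ∈ R) (hb : b ∈ P) (hba : b ∉ scc R a) :
    ¬IsRestingSet R (scc R a) := fun hres =>
  hba <| hres.2 _ hr (Multiset.card_singleton a)
    (fun _ hx => Multiset.mem_singleton.mp hx ▸ mem_scc_self R a) b hb

/-- Property 3 with the cycle indexed by `ℕ` and closed by `x n = x 0`, which avoids the
arithmetic modulo `n`. -/
lemma Prop3.card_eq_one_of_cycle {R : Set (Rxn C)} (h3 : Prop3 R) {n : ℕ} (hn : 0 < n)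
    (x : ℕ → C) (P : ℕ → Multiset C) (hx : x n = x 0)
    (hR : ∀ i < n, ((({x i} : Multiset C), P i) : Rxn C) ∈ R)
    (hcyc : ∀ i < n, x (i + 1) ∈ P i) {i : ℕ} (hi : i < n) : (P i).card = 1 := by
  refine h3 n hn (fun j => ({x j}, P j)) (fun j => ⟨hR j j.2, Multiset.card_singleton _⟩)
    (fun j y hy => ?_) ⟨i, hi⟩
  have hnext : x ((j.1 + 1) % n) = x (j.1 + 1) := by
    rcases (Nat.succ_le_of_lt j.2).lt_or_eq with hlt | heq
    · rw [Nat.mod_eq_of_lt hlt]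
    · rw [← Nat.succ_eq_add_one, heq, Nat.mod_self, hx]
  rw [Multiset.mem_singleton.mp hy, hnext]
  exact hcyc j j.2

lemma Prop3.card_eq_one_of_reach {R : Set (Rxn C)} (h3 : Prop3 R) {a b : C} {P : Multiset C}
    (hr : ((({a} : Multiset C), P) : Rxn C) ∈ R) (hb : b ∈ P) (hba : Reach R b a) :
    P.card = 1 := by
  obtain ⟨m, c, hc0, hcm, hc⟩ := hba.exists_seq
  let x : ℕ → C := fun | 0 => a | k + 1 => c k
  let Q : ℕ → Multiset C := fun | 0 => P | k + 1 => {c (k + 1)}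
  refine h3.card_eq_one_of_cycle (n := m + 1) m.succ_pos x Q hcm ?_ ?_ m.succ_pos
  · rintro (_ | k) hk
    exacts [hr, hc k (by omega)]
  · rintro (_ | k) _
    exacts [(hc0 ▸ hb : c 0 ∈ P), Multiset.mem_singleton_self _]

theorem fate_backward_along_fast_general {C : Type*} (R : Set (Rxn C))
    (hne : NonemptyRxns R) (h3 : Prop3 R)
    (a : C) (l : List (C × Multiset (Set C)))
    (hr : ((({a} : Multiset C), (↑(l.map Prod.fst) : Multiset C)) : Rxn C) ∈ R)
    (hf : ∀ p ∈ l, Fate R p.1 p.2) :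
    Fate R a (l.map Prod.snd).sum := by
  have hl : l ≠ [] := by
    rintro rfl
    exact (hne _ hr).2 rfl
  by_cases hin : ∃ p ∈ l, p.1 ∈ scc R a
  · obtain ⟨p, hp, hpa⟩ := hin
    have hcard := h3.card_eq_one_of_reach hr (Multiset.mem_coe.mpr (List.mem_map_of_mem hp)) hpa.2
    obtain ⟨q, rfl⟩ := List.length_eq_one_iff.mp (by simpa using hcard)
    obtain rfl := List.mem_singleton.mp hp
    simpa using (hf p (List.mem_singleton_self p)).of_scc_eq (scc_eq_of_mem hpa)
  · push Not at hin
    obtain ⟨p, hp⟩ := List.exists_mem_of_ne_nil l hl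
    have hpP : p.1 ∈ l.map Prod.fst := List.mem_map_of_mem hp
    have hnr := not_isRestingSet_scc_of_mem_products hr (Multiset.mem_coe.mpr hpP) (hin p hp)
    exact .step a a l hnr (mem_scc_self R a) hr ⟨p.1, hpP, hin p hp⟩ hf

/-- Assuming Property 3, fates are inherited backwards along fast reactions: for a
fast reaction ({a}, {b₁, …, bₙ}) ∈ R and fates Fᵢ with Fate(bᵢ, Fᵢ), we have
Fate(a, F₁ + … + Fₙ). -/
theorem fate_backward_along_fast {C : Type*} [Fintype C] (R : Set (Rxn C))
    (hRfin : R.Finite) (hne : NonemptyRxns R) (h3 : Prop3 R)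
    (a : C) (l : List (C × Multiset (Set C)))
    (hr : ((({a} : Multiset C), (↑(l.map Prod.fst) : Multiset C)) : Rxn C) ∈ R)
    (hf : ∀ p ∈ l, Fate R p.1 p.2) :
    Fate R a (l.map Prod.snd).sum :=
  fate_backward_along_fast_general R hne h3 a l hr hf
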